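/- Let c₁, c₂ be real numbers with 0 < c₁ ≤ 1 and −1 ≤ c₂ < 0. Then the two equations 5 − (c₁ + c₂) − (1/c₁ + 1/c₂) = 0 and (1 − c₁²)² c₂³ + (1 − c₂²)² c₁³ = 0 cannot hold simultaneously. -/
import Mathlib


/-- In the analysis of the two-dimensional discrete Klein--Gordon phase function:
for `0 < c₁ ≤ 1` and `−1 ≤ c₂ < 0`, the degenerate-Hessian equation
`5 − (c₁ + c₂) − (1/c₁ + 1/c₂) = 0` and the higher-degeneracy equation
`(1 − c₁²)² c₂³ + (1 − c₂²)² c₁³ = 0` cannot hold simultaneously. -/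
theorem no_simultaneous_solutions (c₁ c₂ : ℝ)
    (h₁ : 0 < c₁) (h₁' : c₁ ≤ 1) (h₂ : -1 ≤ c₂) (h₂' : c₂ < 0) :
    ¬(5 - (c₁ + c₂) - (1 / c₁ + 1 / c₂) = 0 ∧
      (1 - c₁ ^ 2) ^ 2 * c₂ ^ 3 + (1 - c₂ ^ 2) ^ 2 * c₁ ^ 3 = 0) := by
  rintro ⟨hA, hB⟩
  have hc1 : c₁ ≠ 0 := ne_of_gt h₁
  have hc2 : c₂ ≠ 0 := ne_of_lt h₂'
  have e1 : 5 * (c₁ * c₂) - (c₁ + c₂) * (c₁ * c₂) - (c₂ + c₁) = 0 := by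
    have := hA
    field_simp at this
    linarith [this]
  -- ab ≤ 1 where a = c₁, b = -c₂
  have hab : -(c₁ * c₂) ≤ 1 := by nlinarith
  have hab0 : 0 < -(c₁ * c₂) := by nlinarith
  -- key : c₁ + c₂ < 0
  have key : c₁ + c₂ < 0 := by nlinarith [sq_nonneg (c₁ + c₂), mul_pos h₁ (neg_pos.mpr h₂')]
  -- so c₁ < -c₂ ≤ 1, hence c₁ < 1
  have hlt : c₁ < -c₂ := by linarith
  have hb1 : -c₂ ≤ 1 := by linarith
  have hc1lt : c₁ < 1 := lt_of_lt_of_le hlt hb1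
  have t1 : 1 - c₂ ^ 2 ≤ 1 - c₁ ^ 2 := by nlinarith
  have t1' : 0 ≤ 1 - c₂ ^ 2 := by nlinarith
  have t2 : (1 - c₂ ^ 2) ^ 2 ≤ (1 - c₁ ^ 2) ^ 2 := by nlinarith
  have t3 : c₁ ^ 3 < (-c₂) ^ 3 := by
    exact pow_lt_pow_left₀ hlt h₁.le three_ne_zero
  rcases eq_or_lt_of_le h₂ with hcase | hcase
  · -- c₂ = -1
    have : c₂ = -1 := hcase.symm
    subst this
    nlinarith [sq_nonneg (1 - c₁ ^ 2), hc1lt, mul_pos h₁ h₁]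
  · -- -1 < c₂, so 1 - c₂² > 0
    have tpos : 0 < (1 - c₂ ^ 2) ^ 2 := by
      have h5 : 0 < 1 - c₂ ^ 2 := by nlinarith [mul_pos (by linarith : (0:ℝ) < 1 - c₂) (by linarith : (0:ℝ) < 1 + c₂)]
      positivity
    have t4 : (0:ℝ) ≤ (-c₂) ^ 3 := pow_nonneg (by linarith) 3
    nlinarith [mul_le_mul_of_nonneg_right t2 t4, mul_lt_mul_of_pos_left t3 tpos]
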